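/- Let G be a strongly topological gyrogroup with symmetric neighborhood base 𝒰 at 0 and H a neutral admissible subgyrogroup generated from 𝒰. If sequences (a_n), (b_n) in G satisfy π(a_n) → π(0) and π(b_n) → π(0) in G/H, then π(a_n ⊕ b_n) → π(0). -/
import Mathlib


open Filter Topology

class Gyrogroup (G : Type*) where
  add : G → G → G
  zero : G
  neg : G → G
  gyr : G → G → G → G
  zero_add : ∀ a, add zero a = a
  add_zero : ∀ a, add a zero = a
  zero_unique : ∀ z : G, (∀ a, add z a = a ∧ add a z = a) → z = zero
  neg_add : ∀ a, add (neg a) a = zero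
  add_neg : ∀ a, add a (neg a) = zero
  neg_unique : ∀ x y : G, add y x = zero → add x y = zero → y = neg x
  gyr_add : ∀ x y a b, gyr x y (add a b) = add (gyr x y a) (gyr x y b)
  gyr_bijective : ∀ x y, Function.Bijective (gyr x y)
  gyroassoc : ∀ x y z, add x (add y z) = add (add x y) (gyr x y z)
  loop : ∀ x y, gyr (add x y) y = gyr x y

namespace Gyrogroup

variable {G : Type*} [Gyrogroup G]

/-- Elementwise sum of two subsets: `A ⊕ B = {a ⊕ b : a ∈ A, b ∈ B}`. -/
def sAdd (A B : Set G) : Set G := Set.image2 add A B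

/-- Elementwise inverse of a subset: `⊖A = {⊖a : a ∈ A}`. -/
def sNeg (A : Set G) : Set G := neg '' A

/-- The left coset `x ⊕ H`. -/
def lcoset (x : G) (H : Set G) : Set G := (fun h => add x h) '' H

/-- The setoid identifying points with equal left cosets; `Quotient` of it is `G/H`. -/
def cosetSetoid (G : Type*) [Gyrogroup G] (H : Set G) : Setoid G :=
  ⟨fun x y => lcoset x H = lcoset y H,
    ⟨fun _ => rfl, fun h => h.symm, fun h1 h2 => h1.trans h2⟩⟩

end Gyrogroup

/-- A (Hausdorff) topological gyrogroup: `⊕` is jointly continuous and `⊖` is continuous. -/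
class TopologicalGyrogroup (G : Type*) [TopologicalSpace G] extends Gyrogroup G where
  t2 : T2Space G
  continuous_add : Continuous fun p : G × G => add p.1 p.2
  continuous_neg : Continuous neg


namespace Gyrogroup
variable {G : Type*} [Gyrogroup G]

theorem my_left_cancel {a u v : G} (h : add a u = add a v) : u = v := by
  have h2 : add (neg a) (add a u) = add (neg a) (add a v) := by rw [h]
  rw [gyroassoc, gyroassoc, neg_add, zero_add, zero_add] at h2
  exact (gyr_bijective (neg a) a).1 h2

theorem my_gyr_zero (b z : G) : gyr zero b z = z := by
  have h := gyroassoc (zero : G) b z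
  rw [zero_add, zero_add] at h
  exact (my_left_cancel h).symm

theorem my_gyr_self_neg (a z : G) : gyr a (neg a) z = z := by
  have h := loop a (neg a)
  rw [add_neg] at h
  rw [← h]; exact my_gyr_zero (neg a) z

theorem my_add_neg_cancel (a b : G) : add a (add (neg a) b) = b := by
  rw [gyroassoc, add_neg, zero_add, my_gyr_self_neg]

theorem my_mem_lcoset_self {H : Set G} (h0 : zero ∈ H) (x : G) : x ∈ lcoset x H :=
  ⟨zero, h0, add_zero x⟩

theorem my_lcoset_eq {H : Set G}
    (haddH : ∀ x ∈ H, ∀ y ∈ H, add x y ∈ H)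
    (hnegH : ∀ x ∈ H, neg x ∈ H)
    (hgyrH : ∀ a b x : G, x ∈ H ↔ gyr a b x ∈ H)
    {x y : G} (hx : x ∈ lcoset y H) : lcoset x H = lcoset y H := by
  obtain ⟨h, hh, rfl⟩ := hx
  ext z
  constructor
  · rintro ⟨k, hk, rfl⟩
    obtain ⟨c, hc⟩ := (gyr_bijective y h).2 k
    refine ⟨add h c, haddH h hh c ((hgyrH y h c).2 (hc ▸ hk)), ?_⟩
    show add y (add h c) = add (add y h) k
    rw [gyroassoc, hc]
  · rintro ⟨k, hk, rfl⟩
    refine ⟨gyr y h (add (neg h) k),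
      (hgyrH y h _).1 (haddH _ (hnegH h hh) _ hk), ?_⟩
    show add (add y h) (gyr y h (add (neg h) k)) = add y k
    rw [← gyroassoc, my_add_neg_cancel]

end Gyrogroup

theorem my_cont_add {G : Type*} [TopologicalSpace G] [TopologicalGyrogroup G]
    {α : Type*} [TopologicalSpace α] {f g : α → G}
    (hf : Continuous f) (hg : Continuous g) :
    Continuous fun x => Gyrogroup.add (f x) (g x) :=
  (TopologicalGyrogroup.continuous_add (G := G)).comp (hf.prodMk hg)

/-- If `H` is a neutral admissible subgyrogroup and `π(aₙ) → π(0)`, `π(bₙ) → π(0)`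
in `G/H`, then `π(aₙ ⊕ bₙ) → π(0)`. -/
theorem quotient_add_tendsto {G : Type*} [TopologicalSpace G] [TopologicalGyrogroup G]
(𝒰 : Set (Set G))
    (hbasis : (𝓝 (Gyrogroup.zero : G)).HasBasis (fun U : Set G => U ∈ 𝒰) id)
    (hsym : ∀ U ∈ 𝒰, Gyrogroup.sNeg U = U)
    (hgyr : ∀ U ∈ 𝒰, ∀ x y : G, Gyrogroup.gyr x y '' U = U)
    (Useq : ℕ → Set G) (hmem : ∀ n, Useq n ∈ 𝒰) (hopen : ∀ n, IsOpen (Useq n))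
    (hchain : ∀ n : ℕ, Gyrogroup.sAdd (Useq (n + 1))
      (Gyrogroup.sAdd (Useq (n + 1)) (Useq (n + 1))) ⊆ Useq n)
    (H : Set G) (hH : H = ⋂ n, Useq n)
    (hneutral : ∀ U : Set G, IsOpen U → Gyrogroup.zero ∈ U →
      ∃ V : Set G, IsOpen V ∧ Gyrogroup.zero ∈ V ∧
        Gyrogroup.sAdd H V ⊆ Gyrogroup.sAdd U H)
    (a b : ℕ → G)
    (ha : Tendsto (fun n => Quotient.mk (Gyrogroup.cosetSetoid G H) (a n)) atTop
      (𝓝 (Quotient.mk (Gyrogroup.cosetSetoid G H) Gyrogroup.zero)))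
    (hb : Tendsto (fun n => Quotient.mk (Gyrogroup.cosetSetoid G H) (b n)) atTop
      (𝓝 (Quotient.mk (Gyrogroup.cosetSetoid G H) Gyrogroup.zero))) :
    Tendsto (fun n => Quotient.mk (Gyrogroup.cosetSetoid G H)
        (Gyrogroup.add (a n) (b n))) atTop
      (𝓝 (Quotient.mk (Gyrogroup.cosetSetoid G H) Gyrogroup.zero)) := by
  classical
  have hUmem : ∀ n, (Useq n) ∈ 𝓝 (Gyrogroup.zero : G) := fun n => hbasis.mem_of_mem (hmem n)
  have hzeroU : ∀ n, (Gyrogroup.zero : G) ∈ Useq n := fun n => mem_of_mem_nhds (hUmem n)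
  have hzeroH : (Gyrogroup.zero : G) ∈ H := by rw [hH]; exact Set.mem_iInter.2 hzeroU
  have hHsub : ∀ n, H ⊆ Useq n := fun n => hH ▸ Set.iInter_subset _ n
  have haddH : ∀ x ∈ H, ∀ y ∈ H, Gyrogroup.add x y ∈ H := by
    intro x hx y hy
    rw [hH]; refine Set.mem_iInter.2 fun n => ?_
    have hxy : Gyrogroup.add x y = Gyrogroup.add x (Gyrogroup.add y Gyrogroup.zero) := by
      rw [Gyrogroup.add_zero]
    rw [hxy]
    exact hchain n (Set.mem_image2_of_mem (hHsub (n+1) hx)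
      (Set.mem_image2_of_mem (hHsub (n+1) hy) (hzeroU (n+1))))
  have hnegH : ∀ x ∈ H, Gyrogroup.neg x ∈ H := by
    intro x hx
    rw [hH]; refine Set.mem_iInter.2 fun n => ?_
    rw [← hsym (Useq n) (hmem n)]
    exact ⟨x, hHsub n hx, rfl⟩
  have hgyrH : ∀ a b x : G, x ∈ H ↔ Gyrogroup.gyr a b x ∈ H := by
    intro a b x
    constructor
    · intro hx; rw [hH]; refine Set.mem_iInter.2 fun n => ?_
      rw [← hgyr (Useq n) (hmem n) a b]
      exact ⟨x, hHsub n hx, rfl⟩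
    · intro hx; rw [hH]; refine Set.mem_iInter.2 fun n => ?_
      have hx' : Gyrogroup.gyr a b x ∈ Useq n := hHsub n hx
      rw [← hgyr (Useq n) (hmem n) a b] at hx'
      obtain ⟨u, hu, hux⟩ := hx'
      rw [← (Gyrogroup.gyr_bijective a b).1 hux]
      exact hu
  have hquot : ∀ x y : G, Quotient.mk (Gyrogroup.cosetSetoid G H) x =
      Quotient.mk (Gyrogroup.cosetSetoid G H) y ↔
      Gyrogroup.lcoset x H = Gyrogroup.lcoset y H := by
    intro x y
    exact ⟨fun h => Quotient.exact h, fun h => Quotient.sound h⟩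
  have hopeniff : ∀ OO : Set (Quotient (Gyrogroup.cosetSetoid G H)), IsOpen OO ↔
      IsOpen ((fun x : G => Quotient.mk (Gyrogroup.cosetSetoid G H) x) ⁻¹' OO) :=
    fun OO => isQuotientMap_quot_mk.isOpen_preimage.symm
  -- saturation transfer
  have hsatP : ∀ (Wset : Set G) (x y : G), Gyrogroup.lcoset x H = Gyrogroup.lcoset y H →
      (∃ h ∈ H, Gyrogroup.add y h ∈ Wset) → ∃ h ∈ H, Gyrogroup.add x h ∈ Wset := by
    rintro Wset x y hxy ⟨h, hh, hyh⟩
    have hy : y ∈ Gyrogroup.lcoset x H := by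
      rw [hxy]; exact Gyrogroup.my_mem_lcoset_self hzeroH y
    obtain ⟨k, hk, rfl⟩ := hy
    obtain ⟨c, hc⟩ := (Gyrogroup.gyr_bijective x k).2 h
    refine ⟨Gyrogroup.add k c, haddH k hk c ((hgyrH x k c).2 (hc ▸ hh)), ?_⟩
    rw [Gyrogroup.gyroassoc, hc]
    exact hyh
  rw [tendsto_nhds] at ha hb ⊢
  intro O hOopen hO0
  set U : Set G := (fun x : G => Quotient.mk (Gyrogroup.cosetSetoid G H) x) ⁻¹' O with hUdef
  have hUopen : IsOpen U := (hopeniff O).1 hOopen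
  have hU0 : (Gyrogroup.zero : G) ∈ U := hO0
  have hUsat : ∀ u ∈ U, ∀ h ∈ H, Gyrogroup.add u h ∈ U := by
    intro u hu h hh
    have heq : Quotient.mk (Gyrogroup.cosetSetoid G H) (Gyrogroup.add u h) =
        Quotient.mk (Gyrogroup.cosetSetoid G H) u :=
      (hquot _ _).2 (Gyrogroup.my_lcoset_eq haddH hnegH hgyrH ⟨h, hh, rfl⟩)
    show Quotient.mk (Gyrogroup.cosetSetoid G H) (Gyrogroup.add u h) ∈ O
    rw [heq]
    exact hu
  -- continuity of add at (0,0)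
  have htend : Tendsto (fun p : G × G => Gyrogroup.add p.1 p.2)
      (𝓝 ((Gyrogroup.zero : G), (Gyrogroup.zero : G))) (𝓝 (Gyrogroup.zero : G)) := by
    have h1 := (TopologicalGyrogroup.continuous_add (G := G)).tendsto
      ((Gyrogroup.zero : G), (Gyrogroup.zero : G))
    rwa [Gyrogroup.add_zero] at h1
  have hpre : (fun p : G × G => Gyrogroup.add p.1 p.2) ⁻¹' U ∈
      𝓝 ((Gyrogroup.zero : G), (Gyrogroup.zero : G)) := htend (hUopen.mem_nhds hU0)
  rw [mem_nhds_prod_iff] at hpre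
  obtain ⟨s, hs, t, ht, hst⟩ := hpre
  obtain ⟨W₀, hW₀s, hW₀open, hW₀0⟩ := mem_nhds_iff.1 hs
  obtain ⟨U', hU't, hU'open, hU'0⟩ := mem_nhds_iff.1 ht
  have hmul : ∀ w ∈ W₀, ∀ u ∈ U', Gyrogroup.add w u ∈ U := fun w hw u hu =>
    hst (Set.mk_mem_prod (hW₀s hw) (hU't hu))
  obtain ⟨V, hVopen, hV0, hVsub⟩ := hneutral U' hU'open hU'0
  obtain ⟨W', hW'U, hW'V⟩ := hbasis.mem_iff.1 (hVopen.mem_nhds hV0)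
  set W₁ := interior W' with hW₁def
  have hW₁open : IsOpen W₁ := isOpen_interior
  have hW₁0 : (Gyrogroup.zero : G) ∈ W₁ :=
    mem_interior_iff_mem_nhds.2 (hbasis.mem_of_mem hW'U)
  have hW₁W' : W₁ ⊆ W' := interior_subset
  -- the saturated open neighborhoods
  have hABopen : ∀ Wset : Set G, IsOpen Wset →
      IsOpen {x : G | ∃ h ∈ H, Gyrogroup.add x h ∈ Wset} := by
    intro Wset hW
    have heq : {x : G | ∃ h ∈ H, Gyrogroup.add x h ∈ Wset} =
        ⋃ h ∈ H, (fun x => Gyrogroup.add x h) ⁻¹' Wset := by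
      ext x; simp [Set.mem_iUnion]
    rw [heq]
    exact isOpen_biUnion fun h _ => hW.preimage (my_cont_add continuous_id continuous_const)
  set A := {x : G | ∃ h ∈ H, Gyrogroup.add x h ∈ W₀} with hAdef
  set B := {x : G | ∃ h ∈ H, Gyrogroup.add x h ∈ W₁} with hBdef
  have hA0 : (Gyrogroup.zero : G) ∈ A :=
    ⟨Gyrogroup.zero, hzeroH, by rw [Gyrogroup.add_zero]; exact hW₀0⟩
  have hB0 : (Gyrogroup.zero : G) ∈ B :=
    ⟨Gyrogroup.zero, hzeroH, by rw [Gyrogroup.add_zero]; exact hW₁0⟩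
  have hsatIm : ∀ Wset : Set G,
      (fun x : G => Quotient.mk (Gyrogroup.cosetSetoid G H) x) ⁻¹'
        ((fun x : G => Quotient.mk (Gyrogroup.cosetSetoid G H) x) ''
          {x : G | ∃ h ∈ H, Gyrogroup.add x h ∈ Wset}) =
        {x : G | ∃ h ∈ H, Gyrogroup.add x h ∈ Wset} := by
    intro Wset
    apply Set.Subset.antisymm
    · intro x hx
      obtain ⟨y, hy, hxy⟩ := hx
      exact hsatP Wset x y ((hquot y x).1 hxy).symm hy
    · intro x hx
      exact ⟨x, hx, rfl⟩
  -- decomposition of members of A, B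
  have hdecomp : ∀ (Wset : Set G) (x : G), (∃ h ∈ H, Gyrogroup.add x h ∈ Wset) →
      ∃ w ∈ Wset, ∃ h₁ ∈ H, Gyrogroup.add w h₁ = x := by
    rintro Wset x ⟨h, hh, hxh⟩
    refine ⟨Gyrogroup.add x h, hxh, ?_⟩
    have hx2 : x ∈ Gyrogroup.lcoset (Gyrogroup.add x h) H := by
      rw [Gyrogroup.my_lcoset_eq haddH hnegH hgyrH
        (⟨h, hh, rfl⟩ : Gyrogroup.add x h ∈ Gyrogroup.lcoset x H)]
      exact Gyrogroup.my_mem_lcoset_self hzeroH x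
    obtain ⟨h₁, hh₁, he⟩ := hx2
    exact ⟨h₁, hh₁, he⟩
  -- the key multiplication estimate
  have hkey : ∀ x ∈ A, ∀ y ∈ B, Gyrogroup.add x y ∈ U := by
    intro x hx y hy
    obtain ⟨w, hwW₀, h₁, hh₁, hx_eq⟩ := hdecomp W₀ x hx
    obtain ⟨w', hw'W₁, h₂, hh₂, hy_eq⟩ := hdecomp W₁ y hy
    -- pull y back through gyr w h₁
    obtain ⟨w₂, hw₂, hgw₂⟩ : ∃ w₂ ∈ W', Gyrogroup.gyr w h₁ w₂ = w' := by
      have hw'W' : w' ∈ W' := hW₁W' hw'W₁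
      rw [← hgyr W' hW'U w h₁] at hw'W'
      obtain ⟨w₂, hw₂, h2⟩ := hw'W'
      exact ⟨w₂, hw₂, h2⟩
    obtain ⟨h₃, hgh₃⟩ := (Gyrogroup.gyr_bijective w h₁).2 h₂
    have hh₃ : h₃ ∈ H := (hgyrH w h₁ h₃).2 (hgh₃ ▸ hh₂)
    have e1 : Gyrogroup.add x y =
        Gyrogroup.add w (Gyrogroup.add h₁ (Gyrogroup.add w₂ h₃)) := by
      rw [Gyrogroup.gyroassoc w h₁ (Gyrogroup.add w₂ h₃), Gyrogroup.gyr_add,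
        hgw₂, hgh₃, hx_eq, hy_eq]
    have hh₄ : Gyrogroup.gyr h₁ w₂ h₃ ∈ H := (hgyrH h₁ w₂ h₃).1 hh₃
    have e2 : Gyrogroup.add h₁ (Gyrogroup.add w₂ h₃) =
        Gyrogroup.add (Gyrogroup.add h₁ w₂) (Gyrogroup.gyr h₁ w₂ h₃) :=
      Gyrogroup.gyroassoc _ _ _
    obtain ⟨u, huU', k, hk, huk⟩ : ∃ u ∈ U', ∃ k ∈ H,
        Gyrogroup.add u k = Gyrogroup.add h₁ w₂ := by
      have hmemV : Gyrogroup.add h₁ w₂ ∈ Gyrogroup.sAdd H V :=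
        Set.mem_image2_of_mem hh₁ (hW'V hw₂)
      have hmemU' := hVsub hmemV
      obtain ⟨u, hu, k, hk, he⟩ := hmemU'
      exact ⟨u, hu, k, hk, he⟩
    obtain ⟨c₂, hc₂⟩ := (Gyrogroup.gyr_bijective u k).2 (Gyrogroup.gyr h₁ w₂ h₃)
    have hc₂H : c₂ ∈ H := (hgyrH u k c₂).2 (hc₂ ▸ hh₄)
    have e3 : Gyrogroup.add (Gyrogroup.add h₁ w₂) (Gyrogroup.gyr h₁ w₂ h₃) =
        Gyrogroup.add u (Gyrogroup.add k c₂) := by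
      rw [Gyrogroup.gyroassoc u k c₂, hc₂, huk]
    have e4 : Gyrogroup.add x y = Gyrogroup.add (Gyrogroup.add w u)
        (Gyrogroup.gyr w u (Gyrogroup.add k c₂)) := by
      rw [e1, e2, e3, Gyrogroup.gyroassoc w u (Gyrogroup.add k c₂)]
    rw [e4]
    exact hUsat _ (hmul w hwW₀ u huU') _ ((hgyrH w u _).1 (haddH k hk c₂ hc₂H))
  -- openness of the images
  have hAim : IsOpen ((fun x : G => Quotient.mk (Gyrogroup.cosetSetoid G H) x) '' A) := by
    rw [hopeniff, hsatIm W₀]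
    exact hABopen W₀ hW₀open
  have hBim : IsOpen ((fun x : G => Quotient.mk (Gyrogroup.cosetSetoid G H) x) '' B) := by
    rw [hopeniff, hsatIm W₁]
    exact hABopen W₁ hW₁open
  have haA := ha _ hAim ⟨Gyrogroup.zero, hA0, rfl⟩
  have hbB := hb _ hBim ⟨Gyrogroup.zero, hB0, rfl⟩
  filter_upwards [haA, hbB] with n h1 h2
  have hAn : a n ∈ A := by
    have : a n ∈ (fun x : G => Quotient.mk (Gyrogroup.cosetSetoid G H) x) ⁻¹'
        ((fun x : G => Quotient.mk (Gyrogroup.cosetSetoid G H) x) '' A) := h1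
    rwa [hsatIm W₀] at this
  have hBn : b n ∈ B := by
    have : b n ∈ (fun x : G => Quotient.mk (Gyrogroup.cosetSetoid G H) x) ⁻¹'
        ((fun x : G => Quotient.mk (Gyrogroup.cosetSetoid G H) x) '' B) := h2
    rwa [hsatIm W₁] at this
  exact hkey _ hAn _ hBn
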